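/- arXiv:2010.04925 — 2 statements merged into one kernel-verified Lean document; each statement's English description precedes it below -/
import Mathlib

section
/- Define γ(θ) = C − A·exp(−(θ−μ)ᵀκ⁻¹(θ−μ)/2) and γ_AMP(θ) = max_{‖Δ‖≤ε} γ(θ+Δ), where A > 0, ε > 0, and κ is symmetric positive definite with smallest eigenvalue σ². Then for every θ, γ_AMP(θ) ≥ C − A·exp(−ε²/(2σ²)), with equality at θ = μ; i.e. min_θ γ_AMP(θ) = C − A·exp(−ε²/(2σ²)). -/
/-!
With `Q x = xᵀ κ⁻¹ x`, the loss `γ θ = C - A exp (-Q (θ - μ) / 2)` is an increasing function of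
`Q (θ - μ)`. Since `κ ≥ σ² I` we get `κ⁻¹ ≤ σ⁻² I`, so `Q Δ ≤ ε² / σ²` on the `ε`-ball, which bounds
`γ_AMP μ` from above. For the lower bound at an arbitrary `θ`, move by `±ε q` with `q` a unit
eigenvector for `σ²`: by the parallelogram identity `Q (x + ε q) + Q (x - ε q) = 2 Q x + 2 ε² / σ²`,
and `Q x ≥ 0`, one of the two signs gives `Q ≥ ε² / σ²`.
-/

open Matrix
open scoped RealInnerProductSpace

section

variable {n : Type*} [Fintype n]

theorem Matrix.add_dotProduct_mulVec_add_add_sub_dotProduct_mulVec_sub {R : Type*} [CommRing R]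
    (M : Matrix n n R) (x y : n → R) :
    (x + y) ⬝ᵥ M *ᵥ (x + y) + (x - y) ⬝ᵥ M *ᵥ (x - y) = 2 * (x ⬝ᵥ M *ᵥ x + y ⬝ᵥ M *ᵥ y) := by
  simp only [mulVec_add, mulVec_sub, add_dotProduct, sub_dotProduct, dotProduct_add,
    dotProduct_sub]
  ring

theorem Matrix.PosSemidef.dotProduct_mulVec_le_max_add_sub {M : Matrix n n ℝ}
    (hM : M.PosSemidef) (x y : n → ℝ) :
    y ⬝ᵥ M *ᵥ y ≤ max ((x + y) ⬝ᵥ M *ᵥ (x + y)) ((x - y) ⬝ᵥ M *ᵥ (x - y)) := by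
  have hx : 0 ≤ x ⬝ᵥ M *ᵥ x := by simpa using hM.dotProduct_mulVec_nonneg x
  have := M.add_dotProduct_mulVec_add_add_sub_dotProduct_mulVec_sub x y
  by_contra! h
  rw [max_lt_iff] at h
  linarith [h.1, h.2]

variable [DecidableEq n]

theorem Matrix.inv_mulVec_eq_inv_smul_of_mulVec_eq_smul {K : Type*} [Field K] {M : Matrix n n K}
    (hM : IsUnit M.det) {c : K} (hc : c ≠ 0) {v : n → K} (hv : M *ᵥ v = c • v) :
    M⁻¹ *ᵥ v = c⁻¹ • v := by
  rw [eq_inv_smul_iff₀ hc, ← mulVec_smul, ← hv, mulVec_mulVec, nonsing_inv_mul _ hM, one_mulVec]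

theorem Matrix.IsHermitian.dotProduct_mulVec_eq_sum_eigenvalues {M : Matrix n n ℝ}
    (hM : M.IsHermitian) (x : EuclideanSpace ℝ n) :
    x ⬝ᵥ M *ᵥ x = ∑ i, hM.eigenvalues i * ⟪hM.eigenvectorBasis i, x⟫ ^ 2 := by
  set b := hM.eigenvectorBasis
  have hcoord (i : n) : ⟪b i, WithLp.toLp 2 (M *ᵥ x)⟫ = hM.eigenvalues i * ⟪b i, x⟫ := by
    simp only [EuclideanSpace.inner_eq_star_dotProduct, star_trivial]
    rw [dotProduct_comm, dotProduct_mulVec, ← mulVec_transpose,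
      ← conjTranspose_eq_transpose_of_trivial, hM.eq, hM.mulVec_eigenvectorBasis,
      smul_dotProduct, smul_eq_mul, dotProduct_comm]
  calc x ⬝ᵥ M *ᵥ x = ⟪x, WithLp.toLp 2 (M *ᵥ x)⟫ := by
        simp [EuclideanSpace.inner_eq_star_dotProduct, dotProduct_comm]
    _ = ∑ i, ⟪x, b i⟫ * ⟪b i, WithLp.toLp 2 (M *ᵥ x)⟫ := (b.sum_inner_mul_inner _ _).symm
    _ = ∑ i, hM.eigenvalues i * ⟪b i, x⟫ ^ 2 := by
      refine Finset.sum_congr rfl fun i _ => ?_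
      rw [hcoord, real_inner_comm]
      ring

theorem Matrix.IsHermitian.mul_norm_sq_le_dotProduct_mulVec {M : Matrix n n ℝ}
    (hM : M.IsHermitian) {c : ℝ}
    (hc : ∀ (lam : ℝ) (v : EuclideanSpace ℝ n), v ≠ 0 → M *ᵥ v = lam • (v : n → ℝ) → c ≤ lam)
    (x : EuclideanSpace ℝ n) :
    c * ‖x‖ ^ 2 ≤ x ⬝ᵥ M *ᵥ x := by
  have hev (i : n) : c ≤ hM.eigenvalues i :=
    hc _ _ (hM.eigenvectorBasis.orthonormal.ne_zero i) (hM.mulVec_eigenvectorBasis i)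
  rw [hM.dotProduct_mulVec_eq_sum_eigenvalues, ← hM.eigenvectorBasis.sum_sq_inner_right,
    Finset.mul_sum]
  exact Finset.sum_le_sum fun i _ => by gcongr; exact hev i

theorem Matrix.PosDef.dotProduct_inv_mulVec_le {M : Matrix n n ℝ} (hM : M.PosDef) {c : ℝ}
    (hc : 0 < c)
    (hmin : ∀ (lam : ℝ) (v : EuclideanSpace ℝ n), v ≠ 0 → M *ᵥ v = lam • (v : n → ℝ) → c ≤ lam)
    (x : EuclideanSpace ℝ n) :
    x ⬝ᵥ M⁻¹ *ᵥ x ≤ ‖x‖ ^ 2 / c := by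
  set y : EuclideanSpace ℝ n := WithLp.toLp 2 (M⁻¹ *ᵥ x)
  have hMy : M *ᵥ y = x := by
    simp [y, mulVec_mulVec, mul_nonsing_inv _ (isUnit_iff_ne_zero.mpr hM.det_pos.ne')]
  have hxy : x ⬝ᵥ M⁻¹ *ᵥ x = ⟪y, x⟫ := by
    simp [y, EuclideanSpace.inner_eq_star_dotProduct]
  have hy : c * ‖y‖ ^ 2 ≤ ‖y‖ * ‖x‖ :=
    calc c * ‖y‖ ^ 2 ≤ y ⬝ᵥ M *ᵥ y := hM.1.mul_norm_sq_le_dotProduct_mulVec hmin y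
      _ = ⟪y, x⟫ := by
        rw [hMy, EuclideanSpace.inner_eq_star_dotProduct, star_trivial, dotProduct_comm]
      _ ≤ ‖y‖ * ‖x‖ := real_inner_le_norm y x
  rw [hxy, le_div_iff₀ hc]
  nlinarith [real_inner_le_norm y x, norm_nonneg x, norm_nonneg y, sq_nonneg (‖x‖ - c * ‖y‖)]

theorem Matrix.PosDef.exists_norm_le_sq_div_le_dotProduct_inv_mulVec_add {M : Matrix n n ℝ}
    (hM : M.PosDef) {c : ℝ} (hc : c ≠ 0) {v : EuclideanSpace ℝ n} (hv : ‖v‖ = 1)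
    (hMv : M *ᵥ v = c • (v : n → ℝ)) {r : ℝ} (hr : 0 ≤ r) (x : EuclideanSpace ℝ n) :
    ∃ Δ : EuclideanSpace ℝ n, ‖Δ‖ ≤ r ∧ r ^ 2 / c ≤ (x + Δ) ⬝ᵥ M⁻¹ *ᵥ (x + Δ) := by
  set y : EuclideanSpace ℝ n := r • v
  have hvv : v ⬝ᵥ v = 1 := by
    have := real_inner_self_eq_norm_sq v
    rwa [hv, EuclideanSpace.inner_eq_star_dotProduct, star_trivial, one_pow] at this
  have hy : y ⬝ᵥ M⁻¹ *ᵥ y = r ^ 2 / c := by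
    have hdet : IsUnit M.det := isUnit_iff_ne_zero.mpr hM.det_pos.ne'
    simp [y, mulVec_smul, inv_mulVec_eq_inv_smul_of_mulVec_eq_smul hdet hc hMv, hvv]
    ring
  have hny : ‖y‖ = r := by simp [y, norm_smul, hv, abs_of_nonneg hr]
  rcases le_max_iff.mp (hM.inv.posSemidef.dotProduct_mulVec_le_max_add_sub x y) with h | h
  · exact ⟨y, hny.le, hy ▸ h⟩
  · exact ⟨-y, by rw [norm_neg, hny], hy ▸ h⟩

end

theorem monotone_sub_mul_exp_neg_half (C : ℝ) {A : ℝ} (hA : 0 ≤ A) :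
    Monotone fun t => C - A * Real.exp (-t / 2) := fun _ _ hst => by
  dsimp only
  gcongr

theorem amp_loss_min_inverted_gaussian (K : ℕ) (κ : Matrix (Fin K) (Fin K) ℝ) (hκ : κ.PosDef)
    (σ2 : ℝ) (hσ2 : 0 < σ2) (qv : EuclideanSpace ℝ (Fin K)) (hqv : ‖qv‖ = 1)
    (heig : κ.mulVec qv = σ2 • (qv : Fin K → ℝ))
    (hmin : ∀ (lam : ℝ) (v : EuclideanSpace ℝ (Fin K)), v ≠ 0 →
      κ.mulVec v = lam • (v : Fin K → ℝ) → σ2 ≤ lam)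
    (μ : EuclideanSpace ℝ (Fin K)) (A C ε : ℝ) (hA : 0 < A) (hε : 0 < ε)
    (γ γAMP : EuclideanSpace ℝ (Fin K) → ℝ)
    (hγ : ∀ θ, γ θ = C - A * Real.exp (-((θ - μ) ⬝ᵥ κ⁻¹.mulVec (θ - μ)) / 2))
    (hγAMP : ∀ θ, IsGreatest ((fun Δ : EuclideanSpace ℝ (Fin K) => γ (θ + Δ)) ''
      {Δ : EuclideanSpace ℝ (Fin K) | ‖Δ‖ ≤ ε}) (γAMP θ)) :
    (∀ θ, C - A * Real.exp (-ε ^ 2 / (2 * σ2)) ≤ γAMP θ) ∧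
      γAMP μ = C - A * Real.exp (-ε ^ 2 / (2 * σ2)) := by
  set g : ℝ → ℝ := fun t => C - A * Real.exp (-t / 2)
  set Q : EuclideanSpace ℝ (Fin K) → ℝ := fun x => x ⬝ᵥ κ⁻¹ *ᵥ x
  have hg : Monotone g := monotone_sub_mul_exp_neg_half C hA.le
  have hγg (θ : EuclideanSpace ℝ (Fin K)) : γ θ = g (Q (θ - μ)) := hγ θ
  have hbound : C - A * Real.exp (-ε ^ 2 / (2 * σ2)) = g (ε ^ 2 / σ2) := by
    simp only [g]
    ring_nf
  have hlb (θ : EuclideanSpace ℝ (Fin K)) : g (ε ^ 2 / σ2) ≤ γAMP θ := by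
    obtain ⟨Δ, hΔ, hQ⟩ :=
      hκ.exists_norm_le_sq_div_le_dotProduct_inv_mulVec_add hσ2.ne' hqv heig hε.le (θ - μ)
    calc g (ε ^ 2 / σ2) ≤ γ (θ + Δ) := by rw [hγg, add_sub_right_comm]; exact hg hQ
      _ ≤ γAMP θ := (hγAMP θ).2 ⟨Δ, hΔ, rfl⟩
  refine ⟨hbound ▸ hlb, hbound ▸ le_antisymm ?_ (hlb μ)⟩
  obtain ⟨Δ, hΔ, hmax : γ (μ + Δ) = γAMP μ⟩ := (hγAMP μ).1
  rw [← hmax, hγg, add_sub_cancel_left]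
  refine hg ((hκ.dotProduct_inv_mulVec_le hσ2 hmin Δ).trans ?_)
  gcongr
  exact hΔ
end

section
/- Suppose C₁ = C₂ = C, A₂ = β·A₁ with 0 < β < 1, and σ₂² = r·σ₁² with r > 0, where A₁ > 0, σ₁² > 0, ε > 0. Then C − β·A₁·exp(−ε²/(2rσ₁²)) < C − A₁·exp(−ε²/(2σ₁²)) if and only if both β > exp(−ε²/(2σ₁²)) and r > 1/(1 + (2σ₁²/ε²)·log β). -/
theorem amp_operational_region (A1 C σ1sq ε β r : ℝ)
    (hA1 : 0 < A1) (hσ : 0 < σ1sq) (hε : 0 < ε) (hβ0 : 0 < β) (hβ1 : β < 1) (hr : 0 < r) :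
    C - β * A1 * Real.exp (-ε ^ 2 / (2 * (r * σ1sq))) < C - A1 * Real.exp (-ε ^ 2 / (2 * σ1sq))
    ↔ (Real.exp (-ε ^ 2 / (2 * σ1sq)) < β ∧
        1 / (1 + (2 * σ1sq / ε ^ 2) * Real.log β) < r) := by
  set L := Real.log β with hLdef
  have ha : (0:ℝ) < ε ^ 2 / (2 * σ1sq) := by positivity
  set a := ε ^ 2 / (2 * σ1sq) with hadef
  have e1 : -ε ^ 2 / (2 * (r * σ1sq)) = -a / r := by
    rw [hadef]; field_simp
  have e2 : -ε ^ 2 / (2 * σ1sq) = -a := by rw [hadef]; ring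
  have e3 : β * A1 * Real.exp (-a / r) = A1 * Real.exp (L + -a / r) := by
    rw [Real.exp_add, hLdef, Real.exp_log hβ0]; ring
  have hb : β = Real.exp L := (Real.exp_log hβ0).symm
  have e5 : 2 * σ1sq / ε ^ 2 = a⁻¹ := by rw [hadef, inv_div]
  rw [e1, e2, sub_lt_sub_iff_left, e3, mul_lt_mul_iff_right₀ hA1, Real.exp_lt_exp, e5]
  have e4 : Real.exp (-a) < β ↔ -a < L := by
    nth_rewrite 1 [hb]; exact Real.exp_lt_exp
  rw [e4]
  have e6 : 1 + a⁻¹ * L = (a + L) / a := by field_simp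
  have hnd : (-a) / r = -(a / r) := neg_div r a
  constructor
  · intro h
    have h1 : a / r < a + L := by linarith [hnd]
    have hsum : 0 < a + L := lt_trans (div_pos ha hr) h1
    have hcross : a < (a + L) * r := (div_lt_iff₀ hr).mp h1
    refine ⟨by linarith, ?_⟩
    rw [e6, one_div_div, div_lt_iff₀ hsum]
    linarith
  · rintro ⟨h1, h2⟩
    have hsum : 0 < a + L := by linarith
    rw [e6, one_div_div, div_lt_iff₀ hsum] at h2
    have : a / r < a + L := (div_lt_iff₀ hr).mpr (by linarith)
    linarith [hnd]
end
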